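/- arXiv:1802.08474 — 2 statements merged into one kernel-verified Lean document; each statement's English description precedes it below -/
import Mathlib

section
/- Let S be a type of states with an invariant I : S → Prop, let ops : Fin n → (S → S) be a finite family of operations that pairwise commute (ops i ∘ ops j = ops j ∘ ops i for all i, j), and let ≺ be a strict partial order on Fin n (the happens-before relation). If for every index i, every I-valid initial state s₀, and every state T that is an admissible state for i from s₀, the state ops i T is I-valid, then the family of operations is I-confluent: for every I-valid initial state s₀, every valid serialization l of (ops, ≺), and every prefix of l, the prefix state obtained by executing that prefix from s₀ is I-valid. -/
/-- Executing a list of operation indices from a state, by a left fold. -/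
def exec {n : ℕ} {S : Type*} (ops : Fin n → S → S) (l : List (Fin n)) (s : S) : S :=
  l.foldl (fun t i => ops i t) s

/-- A valid serialization of `(ops, ≺)`: a list containing every index of `Fin n`
exactly once, such that whenever `hb i j`, `i` occurs before `j` in the list. -/
def ValidSer {n : ℕ} (hb : Fin n → Fin n → Prop) (l : List (Fin n)) : Prop :=
  l.Nodup ∧ (∀ i : Fin n, i ∈ l) ∧
    ∀ i j : Fin n, hb i j → l.idxOf i < l.idxOf j

/-- `T` is an admissible state for index `i` from `s₀`: there is a valid
serialization `l` in which `i` occurs, and `T` results from executing from `s₀`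
the prefix of `l` consisting of all entries strictly preceding `i`. -/
def Admissible {n : ℕ} {S : Type*} (ops : Fin n → S → S)
    (hb : Fin n → Fin n → Prop) (i : Fin n) (s₀ T : S) : Prop :=
  ∃ l : List (Fin n), ValidSer hb l ∧ i ∈ l ∧
    T = exec ops (l.take (l.idxOf i)) s₀

/-- **Theorem 1.** If every operation, applied in any admissible state reached
from an I-valid initial state, yields an I-valid state, then the family of
pairwise commuting operations is I-confluent: every prefix state of any valid
serialization, executed from an I-valid initial state, is I-valid. -/
theorem iConfluent_of_admissible_safe {n : ℕ} {S : Type*} (I : S → Prop)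
    (ops : Fin n → S → S) (hb : Fin n → Fin n → Prop)
    (hcomm : ∀ i j : Fin n, (ops i) ∘ (ops j) = (ops j) ∘ (ops i))
    (hirr : ∀ i : Fin n, ¬ hb i i)
    (htrans : ∀ i j k : Fin n, hb i j → hb j k → hb i k)
    (hsafe : ∀ (i : Fin n) (s₀ T : S), I s₀ → Admissible ops hb i s₀ T → I (ops i T)) :
    ∀ s₀ : S, I s₀ → ∀ l : List (Fin n), ValidSer hb l →
      ∀ k : ℕ, I (exec ops (l.take k) s₀) := by
  intro s₀ hI l hl k
  induction k with
  | zero => simpa [exec] using hI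
  | succ k ih =>
    by_cases hk : k < l.length
    · have htake : l.take (k + 1) = l.take k ++ [l.get ⟨k, hk⟩] := by
        simpa using List.take_concat_get l k hk
      have hidx : l.idxOf (l.get ⟨k, hk⟩) = k := by
        simpa using List.Nodup.idxOf_getElem hl.1 k hk
      have hadm : Admissible ops hb (l.get ⟨k, hk⟩) s₀ (exec ops (l.take k) s₀) := by
        exact ⟨l, hl, l.get_mem _, by rw [hidx]⟩
      have := hsafe (l.get ⟨k, hk⟩) s₀ (exec ops (l.take k) s₀) hI hadm
      simp only [exec, htake, List.foldl_append, List.foldl_cons, List.foldl_nil]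
      exact this
    · push_neg at hk
      rw [List.take_of_length_le (by omega), ← List.take_of_length_le hk]
      exact ih
end

section
/- Let S be a type of states with an invariant I : S → Prop, let ops : Fin n → (S → S) be a finite family of operations that pairwise commute (ops i ∘ ops j = ops j ∘ ops i for all i, j), and let ≺ be a strict partial order on Fin n. Assume that for every index i, every I-valid initial state s₀, and every state T that is an admissible state for i from s₀, the state ops i T is I-valid. Then for every I-valid initial state s₀, all valid serializations of (ops, ≺) executed from s₀ yield one and the same final state, and this common final state is I-valid; that is, all replicas converge to the same invariant-preserving state. -/
/-
A final state is independent of the serialization because commuting operations make the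
fold right-commutative, and any two serializations are permutations of each other. It is
I-valid because the last operation of a serialization is applied to the state reached by
the preceding prefix, which is admissible for that operation.
-/

section

variable {n : ℕ} {S : Type*}

theorem ValidSer.perm {hb : Fin n → Fin n → Prop} {l₁ l₂ : List (Fin n)}
    (h₁ : ValidSer hb l₁) (h₂ : ValidSer hb l₂) : l₁.Perm l₂ :=
  (List.perm_ext_iff_of_nodup h₁.1 h₂.1).2 fun i => iff_of_true (h₁.2.1 i) (h₂.2.1 i)

theorem exec_eq_of_perm {ops : Fin n → S → S} (hcomm : ∀ i j, ops i ∘ ops j = ops j ∘ ops i)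
    {l₁ l₂ : List (Fin n)} (hperm : l₁.Perm l₂) (s : S) : exec ops l₁ s = exec ops l₂ s :=
  haveI : RightCommutative fun (t : S) i => ops i t := ⟨fun t i j => congrFun (hcomm j i) t⟩
  hperm.foldl_eq s

theorem exec_append_singleton (ops : Fin n → S → S) (l : List (Fin n)) (i : Fin n) (s : S) :
    exec ops (l ++ [i]) s = ops i (exec ops l s) :=
  List.foldl_append ..

theorem admissible_of_validSer_append_singleton (ops : Fin n → S → S)
    {hb : Fin n → Fin n → Prop} {l : List (Fin n)} {i : Fin n}
    (hl : ValidSer hb (l ++ [i])) (s₀ : S) : Admissible ops hb i s₀ (exec ops l s₀) := by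
  have hi : i ∉ l := ((List.nodup_concat l i).1 (by rw [List.concat_eq_append]; exact hl.1)).1
  refine ⟨l ++ [i], hl, by simp, ?_⟩
  rw [List.idxOf_append_of_notMem hi, List.idxOf_cons_self, add_zero, List.take_left]

end

theorem converge_to_valid_state_general {n : ℕ} {S : Type*} (I : S → Prop)
    (ops : Fin n → S → S) (hb : Fin n → Fin n → Prop)
    (hcomm : ∀ i j : Fin n, (ops i) ∘ (ops j) = (ops j) ∘ (ops i))
    (hsafe : ∀ (i : Fin n) (s₀ T : S), I s₀ → Admissible ops hb i s₀ T → I (ops i T)) :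
    ∀ s₀ : S, I s₀ →
      (∀ l₁ l₂ : List (Fin n), ValidSer hb l₁ → ValidSer hb l₂ →
        exec ops l₁ s₀ = exec ops l₂ s₀) ∧
      (∀ l : List (Fin n), ValidSer hb l → I (exec ops l s₀)) := by
  intro s₀ hI
  refine ⟨fun l₁ l₂ h₁ h₂ => exec_eq_of_perm hcomm (h₁.perm h₂) s₀, fun l hl => ?_⟩
  rcases List.eq_nil_or_concat' l with rfl | ⟨l', i, rfl⟩
  · exact hI
  · rw [exec_append_singleton]
    exact hsafe i s₀ _ hI (admissible_of_validSer_append_singleton ops hl s₀)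

/-- Under the hypotheses of Theorem 1, all replicas converge: all valid
serializations executed from an I-valid initial state yield one and the same
final state, and this common final state is I-valid. -/
theorem converge_to_valid_state {n : ℕ} {S : Type*} (I : S → Prop)
    (ops : Fin n → S → S) (hb : Fin n → Fin n → Prop)
    (hcomm : ∀ i j : Fin n, (ops i) ∘ (ops j) = (ops j) ∘ (ops i))
    (hirr : ∀ i : Fin n, ¬ hb i i)
    (htrans : ∀ i j k : Fin n, hb i j → hb j k → hb i k)
    (hsafe : ∀ (i : Fin n) (s₀ T : S), I s₀ → Admissible ops hb i s₀ T → I (ops i T)) :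
    ∀ s₀ : S, I s₀ →
      (∀ l₁ l₂ : List (Fin n), ValidSer hb l₁ → ValidSer hb l₂ →
        exec ops l₁ s₀ = exec ops l₂ s₀) ∧
      (∀ l : List (Fin n), ValidSer hb l → I (exec ops l s₀)) :=
  converge_to_valid_state_general I ops hb hcomm hsafe
end
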